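/- For the linearly constrained problem (K = {0}, so the dual is unconstrained), after 2k iterations of Algorithm (DG) with constant step size 1/L_d, the last primal iterate satisfies improved O(1/k) bounds: for all k ≥ 1, ‖G u^{2k} + g‖ ≤ 3 L_d R_d / k and |f(u^{2k}) − f*| ≤ (2 R_d + ‖x^0‖) · 3 L_d R_d / k. -/

import Mathlib

/-!
The map `x ↦ -G u(x) - g` is a supergradient map of the concave dual function `d`, and it is
`L_d`-Lipschitz because quadratic growth of the Lagrangian around its minimisers gives
`σ_f ‖u(a) - u(b)‖² ≤ ⟪a - b, G (u(a) - u(b))⟫`. So (DG) is gradient ascent with step `1/L_d` on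
an `L_d`-smooth concave function. Each step gains at least `‖∇d‖² / (2 L_d)` and satisfies
`d(x*) - d(x^{k+1}) ≤ (L_d/2) (‖x^k - x*‖² - ‖x^{k+1} - x*‖²)`; telescoping, with `d(x^k)`
nondecreasing, gives `k (d(x*) - d(x^k)) ≤ L_d R_d² / 2` and `‖x^k - x*‖ ≤ R_d`. Cocoercivity of
`∇d` makes `‖∇d(x^k)‖` nonincreasing, so the `k` steps from `x^k` to `x^{2k}` yield
`k ‖∇d(x^{2k})‖² / (2 L_d) ≤ d(x*) - d(x^k)`, that is `‖G u^{2k} + g‖ ≤ L_d R_d / k`. Comparing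
the Lagrangian at `x^{2k}` and at `x*` with its value `f*` at `u*` bounds `|f(u^{2k}) - f*|` by
`max(‖x^{2k}‖, ‖x*‖) ‖G u^{2k} + g‖`.
-/

open scoped RealInnerProductSpace

open Set Filter Topology

variable {E F : Type*} [NormedAddCommGroup E] [InnerProductSpace ℝ E]
  [NormedAddCommGroup F] [InnerProductSpace ℝ F]

lemma StrongConvexOn.subset {s t : Set E} {m : ℝ} {f : E → ℝ} (hf : StrongConvexOn t m f)
    (hst : s ⊆ t) (hs : Convex ℝ s) : StrongConvexOn s m f :=
  ⟨hs, fun _ hx _ hy _ _ ha hb hab => hf.2 (hst hx) (hst hy) ha hb hab⟩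

lemma StrongConvexOn.add_sq_le_of_isMinOn {s : Set E} {m : ℝ} {f : E → ℝ} {a y : E}
    (hf : StrongConvexOn s m f) (hmin : IsMinOn f s a) (ha : a ∈ s) (hy : y ∈ s) :
    f a + m / 2 * ‖y - a‖ ^ 2 ≤ f y := by
  set c := m / 2 * ‖y - a‖ ^ 2
  have hseg : ∀ t ∈ Ioo (0 : ℝ) 1, f a + (1 - t) * c ≤ f y := by
    rintro t ⟨ht0, ht1⟩
    have hconv : f (t • y + (1 - t) • a) ≤ t * f y + (1 - t) * f a - t * (1 - t) * c :=
      hf.2 hy ha ht0.le (sub_nonneg.2 ht1.le) (add_sub_cancel t 1)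
    have hle := isMinOn_iff.1 hmin _ (hf.1 hy ha ht0.le (sub_nonneg.2 ht1.le) (add_sub_cancel t 1))
    exact le_of_mul_le_mul_left (by linarith) ht0
  have hlim : Tendsto (fun t : ℝ => f a + (1 - t) * c) (𝓝[>] 0) (𝓝 (f a + c)) :=
    tendsto_nhdsWithin_of_tendsto_nhds
      ((by fun_prop : Continuous fun t : ℝ => f a + (1 - t) * c).tendsto' 0 _ (by ring))
  exact le_of_tendsto hlim (eventually_of_mem (Ioo_mem_nhdsGT one_pos) hseg)

def IsSupergradientMap (d : E → ℝ) (φ : E → E) : Prop :=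
  ∀ x y, d y ≤ d x + ⟪φ x, y - x⟫

namespace IsSupergradientMap

variable {d : E → ℝ} {φ : E → E} {L : ℝ}

lemma sub_inner (h : IsSupergradientMap d φ) (a : E) :
    IsSupergradientMap (fun z => d z - ⟪φ a, z⟫) (fun z => φ z - φ a) := by
  intro x y
  have := h x y
  simp only [inner_sub_left, inner_sub_right] at this ⊢
  linarith

lemma neg_mul_sq_le (h : IsSupergradientMap d φ) (hlip : ∀ x y, ‖φ x - φ y‖ ≤ L * ‖x - y‖)
    (x y : E) : -(L * ‖y - x‖ ^ 2) ≤ d y - d x - ⟪φ x, y - x⟫ := by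
  have hyx := h y x
  have hinner : ⟪φ y, x - y⟫ = -⟪φ y - φ x, y - x⟫ - ⟪φ x, y - x⟫ := by
    rw [← neg_sub y x, inner_neg_right, inner_sub_left]; ring
  have hcs : -(‖φ y - φ x‖ * ‖y - x‖) ≤ ⟪φ y - φ x, y - x⟫ :=
    neg_le_of_abs_le (abs_real_inner_le_norm _ _)
  have hL := mul_le_mul_of_nonneg_right (hlip y x) (norm_nonneg (y - x))
  linarith

lemma hasFDerivAt (h : IsSupergradientMap d φ) (hlip : ∀ x y, ‖φ x - φ y‖ ≤ L * ‖x - y‖)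
    (x : E) : HasFDerivAt d (innerSL ℝ (φ x)) x := by
  refine hasFDerivAt_iff_isLittleO.2
    (Asymptotics.IsBigO.trans_isLittleO ?_ (Asymptotics.isLittleO_pow_sub_sub x one_lt_two))
  refine Asymptotics.IsBigO.of_bound |L| (Eventually.of_forall fun y => ?_)
  have hq : 0 ≤ ‖y - x‖ ^ 2 := by positivity
  rw [innerSL_apply_apply, Real.norm_eq_abs, norm_pow, norm_norm, abs_le]
  constructor
  · nlinarith [h.neg_mul_sq_le hlip x y, le_abs_self L]
  · nlinarith [h x y, abs_nonneg L]

lemma hasDerivAt_line (h : IsSupergradientMap d φ) (hlip : ∀ x y, ‖φ x - φ y‖ ≤ L * ‖x - y‖)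
    (x v : E) (t : ℝ) : HasDerivAt (fun s : ℝ => d (x + s • v)) ⟪φ (x + t • v), v⟫ t := by
  have hline : HasDerivAt (fun s : ℝ => x + s • v) v t := by
    simpa using ((hasDerivAt_id t).smul_const v).const_add x
  have := (h.hasFDerivAt hlip (x + t • v)).comp_hasDerivAt t hline
  rwa [innerSL_apply_apply] at this

lemma add_inner_sub_le (h : IsSupergradientMap d φ) (hlip : ∀ x y, ‖φ x - φ y‖ ≤ L * ‖x - y‖)
    (x v : E) : d x + ⟪φ x, v⟫ - L / 2 * ‖v‖ ^ 2 ≤ d (x + v) := by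
  set q : ℝ → ℝ := fun t => d (x + t • v) - t * ⟪φ x, v⟫ + L / 2 * t ^ 2 * ‖v‖ ^ 2
  have hq : ∀ t, HasDerivAt q (⟪φ (x + t • v), v⟫ - ⟪φ x, v⟫ + L * t * ‖v‖ ^ 2) t := by
    intro t
    refine (((h.hasDerivAt_line hlip x v t).sub ((hasDerivAt_id t).mul_const ⟪φ x, v⟫)).add
      ((((hasDerivAt_id t).pow 2).const_mul (L / 2)).mul_const (‖v‖ ^ 2))).congr_deriv ?_
    simp only [id, Nat.cast_ofNat]
    ring
  have hq' : ∀ t, 0 ≤ t → 0 ≤ ⟪φ (x + t • v), v⟫ - ⟪φ x, v⟫ + L * t * ‖v‖ ^ 2 := by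
    intro t ht
    have hcs : -(‖φ (x + t • v) - φ x‖ * ‖v‖) ≤ ⟪φ (x + t • v) - φ x, v⟫ :=
      neg_le_of_abs_le (abs_real_inner_le_norm _ _)
    have hlipt := hlip (x + t • v) x
    rw [add_sub_cancel_left, norm_smul, Real.norm_of_nonneg ht] at hlipt
    rw [inner_sub_left] at hcs
    nlinarith [mul_le_mul_of_nonneg_right hlipt (norm_nonneg v)]
  have hmono : MonotoneOn q (Ici 0) :=
    monotoneOn_of_deriv_nonneg (convex_Ici 0) (fun t _ => (hq t).continuousAt.continuousWithinAt)
      (fun t _ => (hq t).differentiableAt.differentiableWithinAt)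
      (fun t ht => by
        rw [interior_Ici] at ht
        rw [(hq t).deriv]
        exact hq' t (le_of_lt ht))
  have h01 := hmono self_mem_Ici (mem_Ici.2 zero_le_one) zero_le_one
  norm_num [q] at h01
  linarith

lemma add_sq_le_step (h : IsSupergradientMap d φ) (hlip : ∀ x y, ‖φ x - φ y‖ ≤ L * ‖x - y‖)
    (hL : 0 < L) (x : E) : d x + 1 / (2 * L) * ‖φ x‖ ^ 2 ≤ d (x + (1 / L) • φ x) := by
  have hdesc := h.add_inner_sub_le hlip x ((1 / L) • φ x)
  rw [real_inner_smul_right, real_inner_self_eq_norm_sq, norm_smul, mul_pow,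
    Real.norm_of_nonneg (by positivity)] at hdesc
  have e : 1 / L * ‖φ x‖ ^ 2 - L / 2 * ((1 / L) ^ 2 * ‖φ x‖ ^ 2) = 1 / (2 * L) * ‖φ x‖ ^ 2 := by
    field_simp; ring
  linarith

lemma add_sq_le_add_inner (h : IsSupergradientMap d φ)
    (hlip : ∀ x y, ‖φ x - φ y‖ ≤ L * ‖x - y‖) (hL : 0 < L) (a b : E) :
    d b + 1 / (2 * L) * ‖φ b - φ a‖ ^ 2 ≤ d a + ⟪φ a, b - a⟫ := by
  have hlip' : ∀ x y, ‖(φ x - φ a) - (φ y - φ a)‖ ≤ L * ‖x - y‖ := fun x y => by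
    rw [sub_sub_sub_cancel_right]; exact hlip x y
  -- `z ↦ d z - ⟪φ a, z⟫` is maximal at `a`, so it cannot gain from an ascent step at `b`.
  have hstep := (h.sub_inner a).add_sq_le_step hlip' hL b
  have hmax := h.sub_inner a a (b + (1 / L) • (φ b - φ a))
  simp only [sub_self, inner_zero_left, add_zero] at hstep hmax
  rw [inner_sub_right]
  linarith

lemma inner_sub_le (h : IsSupergradientMap d φ) (hlip : ∀ x y, ‖φ x - φ y‖ ≤ L * ‖x - y‖)
    (hL : 0 < L) (x y : E) : ⟪φ x - φ y, x - y⟫ ≤ -(1 / L) * ‖φ x - φ y‖ ^ 2 := by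
  have hxy := h.add_sq_le_add_inner hlip hL x y
  have hyx := h.add_sq_le_add_inner hlip hL y x
  rw [norm_sub_rev] at hxy
  have hinner : ⟪φ x - φ y, x - y⟫ = -(⟪φ x, y - x⟫ + ⟪φ y, x - y⟫) := by
    rw [← neg_sub x y, inner_neg_right, inner_sub_left]; ring
  have e : 1 / L * ‖φ x - φ y‖ ^ 2 = 2 * (1 / (2 * L) * ‖φ x - φ y‖ ^ 2) := by
    field_simp
  linarith

lemma norm_step_le (h : IsSupergradientMap d φ) (hlip : ∀ x y, ‖φ x - φ y‖ ≤ L * ‖x - y‖)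
    (hL : 0 < L) (x : E) : ‖φ (x + (1 / L) • φ x)‖ ≤ ‖φ x‖ := by
  set y := x + (1 / L) • φ x
  have hco := h.inner_sub_le hlip hL y x
  rw [show y - x = (1 / L) • φ x by simp [y], real_inner_smul_right] at hco
  have hexp := norm_add_sq_real (φ x) (φ y - φ x)
  rw [add_sub_cancel, real_inner_comm] at hexp
  have hdec : ⟪φ y - φ x, φ x⟫ ≤ -‖φ y - φ x‖ ^ 2 := by
    have := mul_le_mul_of_nonneg_left hco hL.le
    field_simp at this
    linarith
  refine (pow_le_pow_iff_left₀ (norm_nonneg _) (norm_nonneg _) two_ne_zero).1 ?_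
  nlinarith

lemma sub_step_le (h : IsSupergradientMap d φ) (hlip : ∀ x y, ‖φ x - φ y‖ ≤ L * ‖x - y‖)
    (hL : 0 < L) (y z : E) :
    d z - d (y + (1 / L) • φ y) ≤ L / 2 * (‖y - z‖ ^ 2 - ‖y + (1 / L) • φ y - z‖ ^ 2) := by
  have hstep := h.add_sq_le_step hlip hL y
  have hsup := h y z
  rw [← neg_sub y z, inner_neg_right, real_inner_comm] at hsup
  rw [show y + (1 / L) • φ y - z = (y - z) + (1 / L) • φ y by abel, norm_add_sq_real,
    real_inner_smul_right, norm_smul, mul_pow, Real.norm_of_nonneg (by positivity)]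
  have e : L / 2 * (‖y - z‖ ^ 2 - (‖y - z‖ ^ 2 + 2 * (1 / L * ⟪y - z, φ y⟫)
      + (1 / L) ^ 2 * ‖φ y‖ ^ 2)) = -⟪y - z, φ y⟫ - 1 / (2 * L) * ‖φ y‖ ^ 2 := by
    field_simp; ring
  rw [e]
  linarith

variable {x : ℕ → E}

lemma monotone_of_step (h : IsSupergradientMap d φ) (hlip : ∀ x y, ‖φ x - φ y‖ ≤ L * ‖x - y‖)
    (hL : 0 < L) (hx : ∀ k, x (k + 1) = x k + (1 / L) • φ (x k)) : Monotone fun k => d (x k) :=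
  monotone_nat_of_le_succ fun k => by
    rw [hx k]
    exact (le_add_of_nonneg_right (by positivity)).trans (h.add_sq_le_step hlip hL (x k))

lemma mul_sub_add_sq_le (h : IsSupergradientMap d φ) (hlip : ∀ x y, ‖φ x - φ y‖ ≤ L * ‖x - y‖)
    (hL : 0 < L) (hx : ∀ k, x (k + 1) = x k + (1 / L) • φ (x k)) (z : E) (k : ℕ) :
    k * (d z - d (x k)) + L / 2 * ‖x k - z‖ ^ 2 ≤ L / 2 * ‖x 0 - z‖ ^ 2 := by
  induction k with
  | zero => simp
  | succ k ih =>
    have hstep := h.sub_step_le hlip hL (x k) z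
    rw [← hx k] at hstep
    have hmono := mul_le_mul_of_nonneg_left (h.monotone_of_step hlip hL hx k.le_succ)
      (Nat.cast_nonneg (α := ℝ) k)
    push_cast
    linarith

lemma norm_sub_le_of_forall_le (h : IsSupergradientMap d φ)
    (hlip : ∀ x y, ‖φ x - φ y‖ ≤ L * ‖x - y‖) (hL : 0 < L)
    (hx : ∀ k, x (k + 1) = x k + (1 / L) • φ (x k)) {z : E} (hz : ∀ y, d y ≤ d z) (k : ℕ) :
    ‖x k - z‖ ≤ ‖x 0 - z‖ := by
  have hgap := h.mul_sub_add_sq_le hlip hL hx z k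
  have : 0 ≤ (k : ℝ) * (d z - d (x k)) := mul_nonneg k.cast_nonneg (sub_nonneg.2 (hz _))
  refine (pow_le_pow_iff_left₀ (norm_nonneg _) (norm_nonneg _) two_ne_zero).1 ?_
  nlinarith

lemma add_mul_sq_le (h : IsSupergradientMap d φ) (hlip : ∀ x y, ‖φ x - φ y‖ ≤ L * ‖x - y‖)
    (hL : 0 < L) (hx : ∀ k, x (k + 1) = x k + (1 / L) • φ (x k)) (k m : ℕ) :
    d (x k) + m / (2 * L) * ‖φ (x (k + m))‖ ^ 2 ≤ d (x (k + m)) := by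
  induction m with
  | zero => simp
  | succ m ih =>
    have hstep := h.add_sq_le_step hlip hL (x (k + m))
    have hnorm := h.norm_step_le hlip hL (x (k + m))
    rw [← hx] at hstep hnorm
    rw [← add_assoc]
    have hsq := pow_le_pow_left₀ (norm_nonneg _) hnorm 2
    have hsq₁ := mul_le_mul_of_nonneg_left hsq (by positivity : (0 : ℝ) ≤ m / (2 * L))
    have hsq₂ := mul_le_mul_of_nonneg_left hsq (by positivity : (0 : ℝ) ≤ 1 / (2 * L))
    rw [Nat.cast_succ, add_div, add_mul]
    linarith

lemma norm_two_mul_le (h : IsSupergradientMap d φ) (hlip : ∀ x y, ‖φ x - φ y‖ ≤ L * ‖x - y‖)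
    (hL : 0 < L) (hx : ∀ k, x (k + 1) = x k + (1 / L) • φ (x k)) {z : E} (hz : ∀ y, d y ≤ d z)
    {k : ℕ} (hk : 0 < k) : ‖φ (x (2 * k))‖ ≤ L * ‖x 0 - z‖ / k := by
  have hk' : (0 : ℝ) < k := Nat.cast_pos.2 hk
  have hwin := h.add_mul_sq_le hlip hL hx k k
  rw [← two_mul] at hwin
  have hgain : k / (2 * L) * ‖φ (x (2 * k))‖ ^ 2 ≤ d z - d (x k) := by
    linarith [hz (x (2 * k))]
  rw [div_mul_eq_mul_div, div_le_iff₀ (by positivity)] at hgain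
  have hgap : k * (d z - d (x k)) ≤ L / 2 * ‖x 0 - z‖ ^ 2 := by
    have : 0 ≤ L / 2 * ‖x k - z‖ ^ 2 := by positivity
    linarith [h.mul_sub_add_sq_le hlip hL hx z k]
  rw [le_div_iff₀ hk', mul_comm]
  refine (pow_le_pow_iff_left₀ (by positivity) (by positivity) two_ne_zero).1 ?_
  nlinarith [mul_le_mul_of_nonneg_left hgain hk'.le]

end IsSupergradientMap

def lagrangian (f : E → ℝ) (G : E →L[ℝ] F) (g : F) (u : E) (y : F) : ℝ :=
  f u + ⟪y, -(G u) - g⟫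

section Lagrangian

variable {f : E → ℝ} {G : E →L[ℝ] F} {g : F} {U : Set E} {σ : ℝ} {uu : F → E}

lemma lagrangian_of_feasible {u : E} (hu : G u + g = 0) (y : F) :
    lagrangian f G g u y = f u := by
  rw [lagrangian, ← neg_add', hu, neg_zero, inner_zero_right, add_zero]

lemma strongConvexOn_lagrangian (hf : StrongConvexOn U σ f) (y : F) :
    StrongConvexOn U σ fun u => lagrangian f G g u y := by
  refine ⟨hf.1, fun a ha b hb s t hs ht hst => ?_⟩
  have hfab := hf.2 ha hb hs ht hst
  have haff : ⟪y, -(G (s • a + t • b)) - g⟫ = s * ⟪y, -(G a) - g⟫ + t * ⟪y, -(G b) - g⟫ := by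
    simp only [map_add, map_smul, inner_sub_right, inner_neg_right, inner_add_right,
      real_inner_smul_right]
    linear_combination ⟪y, g⟫ * hst
  simp only [lagrangian, smul_eq_mul] at hfab ⊢
  rw [haff]
  linarith

lemma isSupergradientMap_dual
    (huu : ∀ y, uu y ∈ U ∧ ∀ u ∈ U, lagrangian f G g (uu y) y ≤ lagrangian f G g u y) :
    IsSupergradientMap (fun y => lagrangian f G g (uu y) y) fun y => -(G (uu y)) - g := by
  intro a b
  have hab := (huu b).2 (uu a) (huu a).1
  have hinner : ⟪-(G (uu a)) - g, b - a⟫ = ⟪b, -(G (uu a)) - g⟫ - ⟪a, -(G (uu a)) - g⟫ := by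
    rw [inner_sub_right, real_inner_comm b, real_inner_comm a]
  simp only [lagrangian] at hab ⊢
  rw [hinner]
  linarith

lemma dual_le_of_feasible
    (huu : ∀ y, uu y ∈ U ∧ ∀ u ∈ U, lagrangian f G g (uu y) y ≤ lagrangian f G g u y)
    {u : E} (hu : u ∈ U) (hfeas : G u + g = 0) (y : F) : lagrangian f G g (uu y) y ≤ f u :=
  ((huu y).2 u hu).trans_eq (lagrangian_of_feasible hfeas y)

lemma mul_sq_le_inner (hconv : ∀ y, StrongConvexOn U σ fun u => lagrangian f G g u y)
    (huu : ∀ y, uu y ∈ U ∧ ∀ u ∈ U, lagrangian f G g (uu y) y ≤ lagrangian f G g u y) (a b : F) :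
    σ * ‖uu a - uu b‖ ^ 2 ≤ ⟪a - b, G (uu a - uu b)⟫ := by
  have hgrowth : ∀ y u, u ∈ U →
      lagrangian f G g (uu y) y + σ / 2 * ‖u - uu y‖ ^ 2 ≤ lagrangian f G g u y := fun y u hu =>
    (hconv y).add_sq_le_of_isMinOn (isMinOn_iff.2 (huu y).2) (huu y).1 hu
  have ha := hgrowth a (uu b) (huu b).1
  have hb := hgrowth b (uu a) (huu a).1
  rw [norm_sub_rev] at ha
  simp only [lagrangian, map_sub, inner_sub_left, inner_sub_right, inner_neg_right] at ha hb ⊢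
  linarith

lemma norm_dual_sub_le (hσ : 0 < σ) (hconv : ∀ y, StrongConvexOn U σ fun u => lagrangian f G g u y)
    (huu : ∀ y, uu y ∈ U ∧ ∀ u ∈ U, lagrangian f G g (uu y) y ≤ lagrangian f G g u y) (a b : F) :
    ‖(-(G (uu a)) - g) - (-(G (uu b)) - g)‖ ≤ ‖G‖ ^ 2 / σ * ‖a - b‖ := by
  have hprimal : σ * ‖uu a - uu b‖ ≤ ‖G‖ * ‖a - b‖ := by
    rcases (norm_nonneg (uu a - uu b)).eq_or_lt with h0 | h0
    · rw [← h0, mul_zero]; positivity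
    · refine le_of_mul_le_mul_right ?_ h0
      calc σ * ‖uu a - uu b‖ * ‖uu a - uu b‖ ≤ ⟪a - b, G (uu a - uu b)⟫ := by
            nlinarith [mul_sq_le_inner hconv huu a b]
        _ ≤ ‖a - b‖ * ‖G (uu a - uu b)‖ := real_inner_le_norm _ _
        _ ≤ ‖a - b‖ * (‖G‖ * ‖uu a - uu b‖) := by gcongr; exact G.le_opNorm _
        _ = ‖G‖ * ‖a - b‖ * ‖uu a - uu b‖ := by ring
  rw [sub_sub_sub_cancel_right, neg_sub_neg, ← map_sub, ← norm_neg, ← map_neg, neg_sub]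
  calc ‖G (uu a - uu b)‖ ≤ ‖G‖ * ‖uu a - uu b‖ := G.le_opNorm _
    _ ≤ ‖G‖ * (‖G‖ / σ * ‖a - b‖) := by
        gcongr
        rw [div_mul_eq_mul_div, le_div_iff₀ hσ]
        linarith
    _ = ‖G‖ ^ 2 / σ * ‖a - b‖ := by ring

lemma abs_sub_le_mul_norm
    (huu : ∀ y, uu y ∈ U ∧ ∀ u ∈ U, lagrangian f G g (uu y) y ≤ lagrangian f G g u y)
    {ustar : E} (hus : ustar ∈ U) (hfeas : G ustar + g = 0) {xstar : F}
    (hxstar : lagrangian f G g (uu xstar) xstar = f ustar) {y : F} {B : ℝ}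
    (hy : ‖y‖ ≤ B) (hxB : ‖xstar‖ ≤ B) : |f (uu y) - f ustar| ≤ B * ‖G (uu y) + g‖ := by
  have hup := dual_le_of_feasible huu hus hfeas y
  have hlow := (huu xstar).2 (uu y) (huu y).1
  rw [hxstar] at hlow
  simp only [lagrangian, ← neg_add', inner_neg_right] at hup hlow
  have hcs₁ := real_inner_le_norm y (G (uu y) + g)
  have hcs₂ := neg_le_of_abs_le (abs_real_inner_le_norm xstar (G (uu y) + g))
  have hB₁ := mul_le_mul_of_nonneg_right hy (norm_nonneg (G (uu y) + g))
  have hB₂ := mul_le_mul_of_nonneg_right hxB (norm_nonneg (G (uu y) + g))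
  rw [abs_le]
  constructor <;> linarith

end Lagrangian

theorem stmt_18_general {n p : ℕ}
    (f : EuclideanSpace ℝ (Fin n) → ℝ) (σf : ℝ) (hσf : 0 < σf)
    (hfsc : StrongConvexOn Set.univ σf f)
    (U : Set (EuclideanSpace ℝ (Fin n))) (hUcv : Convex ℝ U)
    (G : EuclideanSpace ℝ (Fin n) →L[ℝ] EuclideanSpace ℝ (Fin p)) (hG : G ≠ 0) (g : EuclideanSpace ℝ (Fin p))
    (Lag : EuclideanSpace ℝ (Fin n) → EuclideanSpace ℝ (Fin p) → ℝ)
    (hLag : ∀ u x, Lag u x = f u + ⟪x, -(G u) - g⟫)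
    (uu : EuclideanSpace ℝ (Fin p) → EuclideanSpace ℝ (Fin n))
    (huu : ∀ x : EuclideanSpace ℝ (Fin p), uu x ∈ U ∧ ∀ u ∈ U, Lag (uu x) x ≤ Lag u x)
    (d : EuclideanSpace ℝ (Fin p) → ℝ) (hd : ∀ x, d x = Lag (uu x) x)
    (ustar : EuclideanSpace ℝ (Fin n))
    (hustar : ustar ∈ U ∧ G ustar + g = 0 ∧ ∀ u ∈ U, G u + g = 0 → f ustar ≤ f u)
    (fstar : ℝ) (hfstar : fstar = f ustar)
    (Xstar : Set (EuclideanSpace ℝ (Fin p))) (hXstar : Xstar = {x : EuclideanSpace ℝ (Fin p) | d x = fstar})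
    (Ld : ℝ) (hLd : Ld = ‖G‖ ^ 2 / σf)
    (x : ℕ → EuclideanSpace ℝ (Fin p))
    (hxrec : ∀ k, x (k + 1) = x k + (1 / Ld) • (-(G (uu (x k))) - g))
    (xstar : EuclideanSpace ℝ (Fin p)) (hxstar : xstar ∈ Xstar)
    (Rd : ℝ) (hRd : Rd = ‖x 0 - xstar‖)
 :
    ∀ k : ℕ, 1 ≤ k →
      ‖G (uu (x (2 * k))) + g‖ ≤ 3 * Ld * Rd / (k : ℝ) ∧
      |f (uu (x (2 * k))) - fstar| ≤
        (2 * Rd + ‖x 0‖) * (3 * Ld * Rd / (k : ℝ)) := by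
  obtain rfl : Lag = lagrangian f G g := funext fun u => funext (hLag u)
  obtain rfl : d = fun y => lagrangian f G g (uu y) y := funext hd
  subst hXstar hfstar hRd
  have hdual := isSupergradientMap_dual huu
  have hlip := norm_dual_sub_le hσf
    (fun y => strongConvexOn_lagrangian (hfsc.subset (subset_univ U) hUcv) y) huu
  rw [← hLd] at hlip
  have hL : 0 < Ld := hLd ▸ div_pos (pow_pos (norm_pos_iff.2 hG) 2) hσf
  have hxstar' : lagrangian f G g (uu xstar) xstar = f ustar := hxstar
  have hmax : ∀ y, lagrangian f G g (uu y) y ≤ lagrangian f G g (uu xstar) xstar :=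
    fun y => (dual_le_of_feasible huu hustar.1 hustar.2.1 y).trans_eq hxstar'.symm
  intro k hk
  have hgrad : ‖G (uu (x (2 * k))) + g‖ ≤ Ld * ‖x 0 - xstar‖ / k := by
    rw [← norm_neg, neg_add']
    exact hdual.norm_two_mul_le hlip hL hxrec hmax hk
  have hdist := hdual.norm_sub_le_of_forall_le hlip hL hxrec hmax (2 * k)
  have hviol : ‖G (uu (x (2 * k))) + g‖ ≤ 3 * Ld * ‖x 0 - xstar‖ / k :=
    hgrad.trans (by gcongr; linarith)
  refine ⟨hviol, ?_⟩
  have hx2k : ‖x (2 * k)‖ ≤ 2 * ‖x 0 - xstar‖ + ‖x 0‖ := by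
    linarith [norm_le_insert' (x (2 * k)) xstar, norm_le_insert (x 0) xstar]
  have hxs : ‖xstar‖ ≤ 2 * ‖x 0 - xstar‖ + ‖x 0‖ := by
    linarith [norm_le_insert (x 0) xstar, norm_nonneg (x 0 - xstar)]
  calc |f (uu (x (2 * k))) - f ustar|
      ≤ (2 * ‖x 0 - xstar‖ + ‖x 0‖) * ‖G (uu (x (2 * k))) + g‖ :=
        abs_sub_le_mul_norm huu hustar.1 hustar.2.1 hxstar' hx2k hxs
    _ ≤ _ := by gcongr

theorem stmt_18 {n p : ℕ}
    (f : EuclideanSpace ℝ (Fin n) → ℝ) (σf : ℝ) (hσf : 0 < σf)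
    (hfc : Continuous f) (hfsc : StrongConvexOn Set.univ σf f)
    (U : Set (EuclideanSpace ℝ (Fin n))) (hUne : U.Nonempty) (hUcl : IsClosed U) (hUcv : Convex ℝ U)
    (G : EuclideanSpace ℝ (Fin n) →L[ℝ] EuclideanSpace ℝ (Fin p)) (hG : G ≠ 0) (g : EuclideanSpace ℝ (Fin p))
    (Lag : EuclideanSpace ℝ (Fin n) → EuclideanSpace ℝ (Fin p) → ℝ)
    (hLag : ∀ u x, Lag u x = f u + ⟪x, -(G u) - g⟫)
    (uu : EuclideanSpace ℝ (Fin p) → EuclideanSpace ℝ (Fin n))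
    (huu : ∀ x : EuclideanSpace ℝ (Fin p), uu x ∈ U ∧ ∀ u ∈ U, Lag (uu x) x ≤ Lag u x)
    (d : EuclideanSpace ℝ (Fin p) → ℝ) (hd : ∀ x, d x = Lag (uu x) x)
    (ustar : EuclideanSpace ℝ (Fin n))
    (hustar : ustar ∈ U ∧ G ustar + g = 0 ∧ ∀ u ∈ U, G u + g = 0 → f ustar ≤ f u)
    (fstar : ℝ) (hfstar : fstar = f ustar)
    (Xstar : Set (EuclideanSpace ℝ (Fin p))) (hXstar : Xstar = {x : EuclideanSpace ℝ (Fin p) | d x = fstar})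
    (hXne : Xstar.Nonempty)
    (Ld : ℝ) (hLd : Ld = ‖G‖ ^ 2 / σf)
    (x : ℕ → EuclideanSpace ℝ (Fin p))
    (hxrec : ∀ k, x (k + 1) = x k + (1 / Ld) • (-(G (uu (x k))) - g))
    (xstar : EuclideanSpace ℝ (Fin p)) (hxstar : xstar ∈ Xstar)
    (hxstarmin : ∀ z ∈ Xstar, ‖x 0 - xstar‖ ≤ ‖x 0 - z‖)
    (Rd : ℝ) (hRd : Rd = ‖x 0 - xstar‖)
 :
    ∀ k : ℕ, 1 ≤ k →
      ‖G (uu (x (2 * k))) + g‖ ≤ 3 * Ld * Rd / (k : ℝ) ∧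
      |f (uu (x (2 * k))) - fstar| ≤
        (2 * Rd + ‖x 0‖) * (3 * Ld * Rd / (k : ℝ)) :=
  stmt_18_general f σf hσf hfsc U hUcv G hG g Lag hLag uu huu d hd ustar hustar fstar hfstar Xstar
    hXstar Ld hLd x hxrec xstar hxstar Rd hRd
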